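/- arXiv:1703.00563 — 2 statements merged into one kernel-verified Lean document; each statement's English description precedes it below -/
import Mathlib

section
/- Let k be a field, V a discrete valuation ring containing k with fraction field K, normalized valuation v : K^× → ℤ, and residue field equal to k, and let O ⊆ V be a local k-subalgebra with fraction field K such that δ = dim_k(V/O) is finite. Then the complement of the value semigroup S = { v(z) : z ∈ O, z ≠ 0 } in ℕ is finite of cardinality exactly δ, i.e. #(ℕ \ S) = dim_k(V/O). -/
/-!
Let `π` be a uniformizer of `V` and `𝔪` its maximal ideal. The images of `𝔪ⁿ` in `V/O` form a
descending flag of `k`-subspaces, from `V/O` itself at `n = 0` down to `0` once `𝔪ⁿ ⊆ O`; such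
an `n` exists because `V/O` is finite-dimensional and every element of `V` has a denominator in
`O`, so some nonzero `b ∈ O` satisfies `bV ⊆ O`. As the residue field is `k`, the `n`-th step is
spanned modulo the next one by the image of `πⁿ`, so it drops the dimension by one exactly when
`πⁿ ∉ O + 𝔪ⁿ⁺¹`, that is, exactly when no element of `O` has valuation `n`. Counting the drops
along the flag gives `δ = #(ℕ \ S)`.
-/

open IsLocalRing Module Submodule Finset

namespace IsDiscreteValuationRing

variable {V : Type*} [CommRing V] [IsDomain V] [IsDiscreteValuationRing V] {w : V → ℤ}

theorem val_unit_mul_pow (hw_mul : ∀ x y : V, x ≠ 0 → y ≠ 0 → w (x * y) = w x + w y)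
    (hw_nonneg : ∀ x : V, x ≠ 0 → 0 ≤ w x) (u : Vˣ) {π : V} (hπ : π ≠ 0) (n : ℕ) :
    w (u * π ^ n) = n * w π := by
  have hw_map_one : w 1 = 0 := by
    have := hw_mul 1 1 one_ne_zero one_ne_zero
    rw [mul_one] at this
    omega
  have hw_unit : w u = 0 := by
    have := hw_mul _ _ u.ne_zero u⁻¹.ne_zero
    rw [Units.mul_inv, hw_map_one] at this
    linarith [hw_nonneg _ u.ne_zero, hw_nonneg _ u⁻¹.ne_zero]
  induction n with
  | zero => simpa using hw_unit
  | succ n ih =>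
    rw [pow_succ, ← mul_assoc, hw_mul _ _ (mul_ne_zero u.ne_zero (pow_ne_zero n hπ)) hπ, ih]
    push_cast
    ring

theorem val_eq_natCast_iff (hw_mul : ∀ x y : V, x ≠ 0 → y ≠ 0 → w (x * y) = w x + w y)
    (hw_nonneg : ∀ x : V, x ≠ 0 → 0 ≤ w x) (hw_one : ∃ x : V, x ≠ 0 ∧ w x = 1) {π : V}
    (hπ : Irreducible π) (z : V) (n : ℕ) : (z ≠ 0 ∧ w z = n) ↔ ∃ u : Vˣ, z = u * π ^ n := by
  have hw_pi : w π = 1 := by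
    obtain ⟨x, hx0, hx1⟩ := hw_one
    obtain ⟨t, u, rfl⟩ := IsDiscreteValuationRing.eq_unit_mul_pow_irreducible hx0 hπ
    rw [val_unit_mul_pow hw_mul hw_nonneg u hπ.ne_zero] at hx1
    rcases Int.eq_one_or_neg_one_of_mul_eq_one' hx1 with h | h <;>
      linarith [hw_nonneg π hπ.ne_zero]
  constructor
  · rintro ⟨hz0, hzn⟩
    obtain ⟨t, u, rfl⟩ := IsDiscreteValuationRing.eq_unit_mul_pow_irreducible hz0 hπ
    rw [val_unit_mul_pow hw_mul hw_nonneg u hπ.ne_zero, hw_pi, mul_one, Nat.cast_inj] at hzn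
    exact ⟨u, by rw [hzn]⟩
  · rintro ⟨u, rfl⟩
    exact ⟨mul_ne_zero u.ne_zero (pow_ne_zero n hπ.ne_zero),
      by rw [val_unit_mul_pow hw_mul hw_nonneg u hπ.ne_zero, hw_pi, mul_one]⟩

end IsDiscreteValuationRing

open scoped Classical in
theorem Module.finrank_eq_card_filter_of_eq_sup_span {K M : Type*} [DivisionRing K]
    [AddCommGroup M] [Module K M] [FiniteDimensional K M] {F : ℕ → Submodule K M} {x : ℕ → M}
    {N : ℕ} (h0 : F 0 = ⊤) (hN : F N = ⊥) (hstep : ∀ n, F n = F (n + 1) ⊔ K ∙ x n) :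
    finrank K M = #{n ∈ range N | x n ∉ F (n + 1)} := by
  have hrank (n : ℕ) :
      finrank K (F n) = finrank K (F (n + 1)) + if x n ∉ F (n + 1) then 1 else 0 := by
    rw [hstep n]
    split_ifs with h
    · rw [sup_eq_left.mpr (span_singleton_le_iff_mem _ _ |>.mpr h), add_zero]
    · exact finrank_sup_span_singleton h
  have htel (N : ℕ) :
      finrank K (F 0) = #{n ∈ range N | x n ∉ F (n + 1)} + finrank K (F N) := by
    induction N with
    | zero => simp
    | succ N ih => rw [ih, hrank N, card_filter, card_filter, sum_range_succ]; ring
  rw [← finrank_top, ← h0, htel N, hN, finrank_bot, add_zero]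

theorem Submodule.exists_finset_span_sup_eq_top {R M : Type*} [Ring R] [AddCommGroup M]
    [Module R M] (p : Submodule R M) [Module.Finite R (M ⧸ p)] :
    ∃ t : Finset M, span R t ⊔ p = ⊤ := by
  classical
  obtain ⟨s, hs⟩ := Module.Finite.fg_top (R := R) (M := M ⧸ p)
  refine ⟨s.image Quotient.out, ?_⟩
  rw [sup_comm, ← Submodule.map_mkQ_eq_top, map_span, coe_image, ← Set.image_comp]
  convert hs
  ext q
  simp [Submodule.Quotient.mk_out]

section Subalgebra

variable {k V : Type*} [CommRing k] [CommRing V] [IsDomain V] [Algebra k V] (O : Subalgebra k V)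

theorem Subalgebra.exists_ne_zero_mul_mem_of_finset
    (hO : ∀ x : V, ∃ a b : O, b ≠ 0 ∧ (b : V) * x = a) (t : Finset V) :
    ∃ b ∈ O, b ≠ 0 ∧ ∀ x ∈ t, b * x ∈ O := by
  classical
  induction t using Finset.induction_on with
  | empty => exact ⟨1, O.one_mem, one_ne_zero, by simp⟩
  | insert a t _ ih =>
    obtain ⟨b, hbO, hb0, hbt⟩ := ih
    obtain ⟨p, d, hd0, hda⟩ := hO a
    refine ⟨d * b, O.mul_mem d.2 hbO, mul_ne_zero (by simpa using hd0) hb0, ?_⟩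
    simp only [Finset.forall_mem_insert]
    refine ⟨?_, fun x hx => ?_⟩
    · rw [mul_right_comm, hda]
      exact O.mul_mem p.2 hbO
    · rw [mul_assoc]
      exact O.mul_mem d.2 (hbt x hx)

theorem Subalgebra.exists_ne_zero_mul_mem [Module.Finite k (V ⧸ Subalgebra.toSubmodule O)]
    (hO : ∀ x : V, ∃ a b : O, b ≠ 0 ∧ (b : V) * x = a) :
    ∃ b ∈ O, b ≠ 0 ∧ ∀ x, b * x ∈ O := by
  obtain ⟨t, ht⟩ := exists_finset_span_sup_eq_top (Subalgebra.toSubmodule O)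
  obtain ⟨b, hbO, hb0, hbt⟩ := O.exists_ne_zero_mul_mem_of_finset hO t
  have hle : span k t ⊔ Subalgebra.toSubmodule O ≤
      (Subalgebra.toSubmodule O).comap (LinearMap.mulLeft k b) :=
    sup_le (span_le.mpr hbt) fun y hy => O.mul_mem hbO hy
  exact ⟨b, hbO, hb0, fun x => hle (ht ▸ mem_top)⟩

end Subalgebra

section DVR

variable {k V : Type*} [CommRing k] [CommRing V] [IsDomain V] [IsDiscreteValuationRing V]
  [Algebra k V] {π : V}

theorem Irreducible.mem_maximalIdeal_pow_iff (hπ : Irreducible π) (x : V) (n : ℕ) :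
    x ∈ maximalIdeal V ^ n ↔ π ^ n ∣ x := by
  rw [hπ.maximalIdeal_eq, Ideal.span_singleton_pow, Ideal.mem_span_singleton]

theorem exists_algebraMap_sub_mem_maximalIdeal
    (hres : Function.Surjective ((residue V).comp (algebraMap k V))) (x : V) :
    ∃ c : k, x - algebraMap k V c ∈ maximalIdeal V := by
  obtain ⟨c, hc⟩ := hres (residue V x)
  exact ⟨c, by rw [← residue_eq_zero_iff, map_sub, ← RingHom.comp_apply, hc, sub_self]⟩

theorem restrictScalars_maximalIdeal_pow_eq_sup
    (hres : Function.Surjective ((residue V).comp (algebraMap k V))) (hπ : Irreducible π)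
    (n : ℕ) : (maximalIdeal V ^ n).restrictScalars k =
      (maximalIdeal V ^ (n + 1)).restrictScalars k ⊔ k ∙ π ^ n := by
  have hπm : π ∈ maximalIdeal V := (mem_maximalIdeal π).mpr hπ.not_isUnit
  apply le_antisymm
  · intro x hx
    obtain ⟨y, rfl⟩ := (hπ.mem_maximalIdeal_pow_iff x n).mp hx
    obtain ⟨c, hc⟩ := exists_algebraMap_sub_mem_maximalIdeal hres y
    refine mem_sup.mpr ⟨π ^ n * (y - algebraMap k V c), ?_, c • π ^ n,
      mem_span_singleton_self _ |> smul_mem _ c, ?_⟩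
    · rw [restrictScalars_mem, pow_succ]
      exact Ideal.mul_mem_mul (Ideal.pow_mem_pow hπm n) hc
    · rw [Algebra.smul_def]
      ring
  · refine sup_le (fun x hx => Ideal.pow_le_pow_right n.le_succ hx) ?_
    exact (span_singleton_le_iff_mem _ _).mpr (Ideal.pow_mem_pow hπm n)

theorem pow_mem_sup_maximalIdeal_pow_iff
    (hres : Function.Surjective ((residue V).comp (algebraMap k V))) (O : Subalgebra k V)
    (hπ : Irreducible π) (n : ℕ) :
    π ^ n ∈ Subalgebra.toSubmodule O ⊔ (maximalIdeal V ^ (n + 1)).restrictScalars k ↔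
      ∃ z : O, ∃ u : Vˣ, (z : V) = u * π ^ n := by
  have hπm : π ∈ maximalIdeal V := (mem_maximalIdeal π).mpr hπ.not_isUnit
  constructor
  · rintro h
    obtain ⟨z, hz, w, hw, hzw⟩ := mem_sup.mp h
    obtain ⟨y, rfl⟩ := (hπ.mem_maximalIdeal_pow_iff w (n + 1)).mp hw
    have hu : IsUnit (1 - π * y) := isUnit_one_sub_self_of_mem_nonunits _
      ((mem_maximalIdeal _).mp (Ideal.mul_mem_right y _ hπm))
    refine ⟨⟨z, hz⟩, hu.unit, ?_⟩
    change z = _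
    rw [IsUnit.unit_spec, eq_sub_of_add_eq hzw, pow_succ]
    ring
  · rintro ⟨z, u, hzu⟩
    obtain ⟨c, hc⟩ := exists_algebraMap_sub_mem_maximalIdeal hres (↑u⁻¹ : V)
    refine mem_sup.mpr ⟨c • (z : V), O.smul_mem z.2 c, (↑u⁻¹ - algebraMap k V c) * z, ?_, ?_⟩
    · rw [restrictScalars_mem, pow_succ, mul_comm (_ - _)]
      have hz : (z : V) ∈ maximalIdeal V ^ n :=
        (hπ.mem_maximalIdeal_pow_iff _ n).mpr (Dvd.intro_left _ hzu.symm)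
      exact Ideal.mul_mem_mul hz hc
    · rw [Algebra.smul_def, hzu, ← add_mul, add_sub_cancel, ← mul_assoc, Units.inv_mul, one_mul]

end DVR

section Gaps

variable {k V : Type*} [Field k] [CommRing V] [IsDomain V] [IsDiscreteValuationRing V]
  [Algebra k V] (O : Subalgebra k V) {π : V}

theorem Subalgebra.exists_maximalIdeal_pow_le [Module.Finite k (V ⧸ Subalgebra.toSubmodule O)]
    (hO : ∀ x : V, ∃ a b : O, b ≠ 0 ∧ (b : V) * x = a) :
    ∃ c : ℕ, (maximalIdeal V ^ c).restrictScalars k ≤ Subalgebra.toSubmodule O := by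
  obtain ⟨π, hπ⟩ := IsDiscreteValuationRing.exists_irreducible V
  obtain ⟨b, -, hb0, hb⟩ := O.exists_ne_zero_mul_mem hO
  obtain ⟨c, u, rfl⟩ := IsDiscreteValuationRing.eq_unit_mul_pow_irreducible hb0 hπ
  refine ⟨c, fun x hx => ?_⟩
  obtain ⟨y, rfl⟩ := (hπ.mem_maximalIdeal_pow_iff x c).mp hx
  change π ^ c * y ∈ O
  convert hb (↑u⁻¹ * y) using 1
  rw [mul_mul_mul_comm, Units.mul_inv, one_mul]

def Subalgebra.quotientFiltration (n : ℕ) : Submodule k (V ⧸ Subalgebra.toSubmodule O) :=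
  ((maximalIdeal V ^ n).restrictScalars k).map (Subalgebra.toSubmodule O).mkQ

-- The gaps of the value semigroup of `O`, read off inside `V`
-- (see `pow_mem_sup_maximalIdeal_pow_iff`).
def Subalgebra.orderGaps (π : V) : Set ℕ :=
  {n | π ^ n ∉ Subalgebra.toSubmodule O ⊔ (maximalIdeal V ^ (n + 1)).restrictScalars k}

theorem Subalgebra.quotientFiltration_zero : O.quotientFiltration 0 = ⊤ := by
  simp [quotientFiltration]

theorem Subalgebra.quotientFiltration_eq_bot {c : ℕ}
    (hc : (maximalIdeal V ^ c).restrictScalars k ≤ Subalgebra.toSubmodule O) :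
    O.quotientFiltration c = ⊥ := by
  rw [quotientFiltration, eq_bot_iff, map_le_iff_le_comap, comap_bot, ker_mkQ]
  exact hc

theorem Subalgebra.quotientFiltration_eq_sup
    (hres : Function.Surjective ((residue V).comp (algebraMap k V))) (hπ : Irreducible π)
    (n : ℕ) : O.quotientFiltration n =
      O.quotientFiltration (n + 1) ⊔ k ∙ (Subalgebra.toSubmodule O).mkQ (π ^ n) := by
  rw [quotientFiltration, quotientFiltration, restrictScalars_maximalIdeal_pow_eq_sup hres hπ n,
    Submodule.map_sup, map_span, Set.image_singleton]

theorem Subalgebra.mkQ_pow_mem_quotientFiltration_iff (n : ℕ) :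
    (Subalgebra.toSubmodule O).mkQ (π ^ n) ∈ O.quotientFiltration (n + 1) ↔
      n ∉ O.orderGaps π := by
  rw [quotientFiltration, ← Submodule.mem_comap, comap_map_mkQ, orderGaps, Set.mem_ofPred_eq,
    not_not]

theorem Subalgebra.orderGaps_finite_and_ncard_eq_finrank
    (hres : Function.Surjective ((residue V).comp (algebraMap k V))) (hπ : Irreducible π)
    (hO : ∀ x : V, ∃ a b : O, b ≠ 0 ∧ (b : V) * x = a)
    [FiniteDimensional k (V ⧸ Subalgebra.toSubmodule O)] :
    (O.orderGaps π).Finite ∧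
      (O.orderGaps π).ncard = finrank k (V ⧸ Subalgebra.toSubmodule O) := by
  classical
  obtain ⟨c, hc⟩ := O.exists_maximalIdeal_pow_le hO
  have hπm : π ∈ maximalIdeal V := (mem_maximalIdeal π).mpr hπ.not_isUnit
  have hgaps : O.orderGaps π = ↑{n ∈ range c |
      (Subalgebra.toSubmodule O).mkQ (π ^ n) ∉ O.quotientFiltration (n + 1)} := by
    ext n
    simp only [coe_filter, mem_range, Set.mem_ofPred_eq, O.mkQ_pow_mem_quotientFiltration_iff,
      not_not, iff_and_self]
    intro hn
    by_contra! hcn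
    exact hn (mem_sup_left (hc (Ideal.pow_le_pow_right hcn (Ideal.pow_mem_pow hπm n))))
  rw [hgaps, Set.ncard_coe_finset, finrank_eq_card_filter_of_eq_sup_span O.quotientFiltration_zero
    (O.quotientFiltration_eq_bot hc) (O.quotientFiltration_eq_sup hres hπ)]
  exact ⟨finite_toSet _, rfl⟩

end Gaps

theorem universal_zeta_stmt_5_general
    (k V K : Type*) [Field k] [CommRing V] [IsDomain V] [IsDiscreteValuationRing V]
    [Algebra k V] [Field K] [Algebra V K] [IsFractionRing V K]
    -- `v` is the normalized valuation of `V` on `K^×`: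
    (v : K → ℤ)
    (hv_mul : ∀ x y : K, x ≠ 0 → y ≠ 0 → v (x * y) = v x + v y)
    (hv_surj : ∀ m : ℤ, ∃ x : K, x ≠ 0 ∧ v x = m)
    (hv_ring : ∀ x : K, x ≠ 0 → (0 ≤ v x ↔ ∃ z : V, algebraMap V K z = x))
    -- `V` has residue field `k`:
    (hres : Function.Bijective ((IsLocalRing.residue V).comp (algebraMap k V)))
    -- `O` is a local `k`-subalgebra of `V`:
    (O : Subalgebra k V)
    -- whose fraction field equals `K`:
    (hfrac : ∀ x : K, ∃ a b : O, b ≠ 0 ∧ algebraMap V K (b : V) * x = algebraMap V K (a : V))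
    -- and such that `δ = dim_k (V/O)` is finite:
    [FiniteDimensional k (V ⧸ Subalgebra.toSubmodule O)] :
    {n : ℕ | ¬ ∃ z : O, (z : V) ≠ 0 ∧ v (algebraMap V K (z : V)) = (n : ℤ)}.Finite ∧
      {n : ℕ | ¬ ∃ z : O, (z : V) ≠ 0 ∧ v (algebraMap V K (z : V)) = (n : ℤ)}.ncard =
        Module.finrank k (V ⧸ Subalgebra.toSubmodule O) := by
  have hinj := IsFractionRing.injective V K
  have hne {z : V} (hz : z ≠ 0) : algebraMap V K z ≠ 0 := (map_ne_zero_iff _ hinj).mpr hz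
  have hval_one : ∃ z : V, z ≠ 0 ∧ v (algebraMap V K z) = 1 := by
    obtain ⟨x, hx0, hx1⟩ := hv_surj 1
    obtain ⟨z, rfl⟩ := (hv_ring x hx0).mp (by omega)
    exact ⟨z, fun h => hx0 (by rw [h, map_zero]), hx1⟩
  obtain ⟨π, hπ⟩ := IsDiscreteValuationRing.exists_irreducible V
  have hval (z : V) (n : ℕ) := IsDiscreteValuationRing.val_eq_natCast_iff
    (fun x y hx hy => by rw [map_mul]; exact hv_mul _ _ (hne hx) (hne hy))
    (fun x hx => (hv_ring _ (hne hx)).mpr ⟨x, rfl⟩) hval_one hπ z n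
  have hgaps : {n : ℕ | ¬ ∃ z : O, (z : V) ≠ 0 ∧ v (algebraMap V K (z : V)) = (n : ℤ)} =
      O.orderGaps π := by
    ext n
    simp only [Set.mem_ofPred_eq, hval, Subalgebra.orderGaps,
      pow_mem_sup_maximalIdeal_pow_iff hres.2 O hπ]
  rw [hgaps]
  refine O.orderGaps_finite_and_ncard_eq_finrank hres.2 hπ fun x => ?_
  obtain ⟨a, b, hb0, hab⟩ := hfrac (algebraMap V K x)
  exact ⟨a, b, hb0, hinj (by rw [map_mul, hab])⟩

/-- Let `k` be a field, `V` a discrete valuation ring containing `k` with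
fraction field `K`, normalized valuation `v : K^× → ℤ` and residue field `k`, and let
`O ⊆ V` be a local `k`-subalgebra with fraction field `K` such that `δ = dim_k (V/O)` is
finite.  Then the complement in `ℕ` of the value semigroup `S = { v z : z ∈ O, z ≠ 0 }`
is finite of cardinality exactly `δ`, i.e. `#(ℕ \ S) = dim_k (V/O)`. -/
theorem universal_zeta_stmt_5
    (k V K : Type*) [Field k] [CommRing V] [IsDomain V] [IsDiscreteValuationRing V]
    [Algebra k V] [Field K] [Algebra V K] [IsFractionRing V K]
    -- `v` is the normalized valuation of `V` on `K^×`: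
    (v : K → ℤ)
    (hv_mul : ∀ x y : K, x ≠ 0 → y ≠ 0 → v (x * y) = v x + v y)
    (hv_add : ∀ x y : K, x ≠ 0 → y ≠ 0 → x + y ≠ 0 → min (v x) (v y) ≤ v (x + y))
    (hv_surj : ∀ m : ℤ, ∃ x : K, x ≠ 0 ∧ v x = m)
    (hv_ring : ∀ x : K, x ≠ 0 → (0 ≤ v x ↔ ∃ z : V, algebraMap V K z = x))
    -- `V` has residue field `k`:
    (hres : Function.Bijective ((IsLocalRing.residue V).comp (algebraMap k V)))
    -- `O` is a local `k`-subalgebra of `V`: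
    (O : Subalgebra k V) [IsLocalRing O]
    -- whose fraction field equals `K`:
    (hfrac : ∀ x : K, ∃ a b : O, b ≠ 0 ∧ algebraMap V K (b : V) * x = algebraMap V K (a : V))
    -- and such that `δ = dim_k (V/O)` is finite:
    [FiniteDimensional k (V ⧸ Subalgebra.toSubmodule O)] :
    {n : ℕ | ¬ ∃ z : O, (z : V) ≠ 0 ∧ v (algebraMap V K (z : V)) = (n : ℤ)}.Finite ∧
      {n : ℕ | ¬ ∃ z : O, (z : V) ≠ 0 ∧ v (algebraMap V K (z : V)) = (n : ℤ)}.ncard =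
        Module.finrank k (V ⧸ Subalgebra.toSubmodule O) :=
  universal_zeta_stmt_5_general k V K v hv_mul hv_surj hv_ring hres O hfrac
end

section
/- Let F_q be a finite field, V a complete discrete valuation ring containing F_q with fraction field K, normalized valuation v, and residue field equal to F_q, and let O ⊆ V be a local F_q-subalgebra with fraction field K, maximal ideal m_O = m_V ∩ O, and δ = dim_{F_q}(V/O) finite. Then O^× has finite index in V^× and [V^× : O^×] = q^δ. -/
/-! Every element of `V` is a fraction of `O` and `V/O` is finite-dimensional, so a single
`b ≠ 0` satisfies `bV ⊆ O`; hence `O` contains an ideal `I ⊆ m_V` with `V/I` finite. Units and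
additive cosets of `O` can then both be counted in the finite local ring `A = V/I` and its subring
`B = O/I`: in either ring the units are exactly the elements of nonzero residue (for `B` because a
subring of a finite ring contains the inverses of its elements that are units in `A`), so
`|A^×| = |A| (q-1)/q` and `|B^×| = |B| (q-1)/q`, whence
`[V^× : O^×] = [A^× : B^×] = [A : B] = |V/O| = q^δ`. -/

open IsLocalRing

theorem Subalgebra.exists_ne_zero_forall_mul_mem {k V : Type*} [CommRing k] [CommRing V]
    [NoZeroDivisors V] [Algebra k V] (O : Subalgebra k V)
    [Module.Finite k (V ⧸ Subalgebra.toSubmodule O)]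
    (hden : ∀ x : V, ∃ b ∈ O, b ≠ 0 ∧ b * x ∈ O) :
    ∃ b ∈ O, b ≠ 0 ∧ ∀ x : V, b * x ∈ O := by
  set p := Subalgebra.toSubmodule O
  suffices ∀ N : Submodule k (V ⧸ p), N.FG → ∃ b ∈ O, b ≠ 0 ∧ ∀ x, p.mkQ x ∈ N → b * x ∈ O by
    simpa using this ⊤ Module.Finite.fg_top
  refine Submodule.fg_induction
    (motive := fun N _ => ∃ b ∈ O, b ≠ 0 ∧ ∀ x, p.mkQ x ∈ N → b * x ∈ O) ?_ ?_
  · intro ξ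
    obtain ⟨w, rfl⟩ := p.mkQ_surjective ξ
    obtain ⟨b, hbO, hb0, hbw⟩ := hden w
    refine ⟨b, hbO, hb0, fun x hx => ?_⟩
    obtain ⟨c, hc⟩ := Submodule.mem_span_singleton.mp hx
    have hxw : x - c • w ∈ O := (Submodule.Quotient.eq p).mp (by simpa using hc.symm)
    have : b * x = b * (x - c • w) + c • (b * w) := by rw [mul_sub, mul_smul_comm]; abel
    rw [this]
    exact O.add_mem (O.mul_mem hbO hxw) (O.smul_mem hbw c)
  · rintro N₁ N₂ - - ⟨b₁, hb₁O, hb₁0, hb₁⟩ ⟨b₂, hb₂O, hb₂0, hb₂⟩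
    refine ⟨b₁ * b₂, O.mul_mem hb₁O hb₂O, mul_ne_zero hb₁0 hb₂0, fun x hx => ?_⟩
    obtain ⟨y₁, hy₁, y₂, hy₂, hy⟩ := Submodule.mem_sup.mp hx
    obtain ⟨x₁, rfl⟩ := p.mkQ_surjective y₁
    have hx₂ : p.mkQ (x - x₁) ∈ N₂ := by rwa [map_sub, ← hy, add_sub_cancel_left]
    have : b₁ * b₂ * x = b₂ * (b₁ * x₁) + b₁ * (b₂ * (x - x₁)) := by ring
    rw [this]
    exact O.add_mem (O.mul_mem hb₂O (hb₁ x₁ hy₁)) (O.mul_mem hb₁O (hb₂ _ hx₂))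

theorem Subring.isLocalHom_subtype_of_finite {A : Type*} [Ring A] (B : Subring A) [Finite B] :
    IsLocalHom B.subtype :=
  ⟨fun _ hb => IsLeftRegular.isUnit_of_finite fun _ _ h =>
    Subtype.ext (hb.mul_left_cancel (congrArg Subtype.val h))⟩

theorem Nat.card_units_mul_card_eq_of_isLocalHom {R F : Type*} [CommRing R] [Finite R] [Field F]
    (r : R →+* F) [IsLocalHom r] (hr : Function.Surjective r) :
    Nat.card Rˣ * Nat.card F = Nat.card R * (Nat.card F - 1) := by
  classical
  have hunit : ∀ a, IsUnit a ↔ a ∉ RingHom.ker r := fun a => by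
    rw [← isUnit_map_iff r, isUnit_iff_ne_zero, RingHom.mem_ker]
  have hunits : Nat.card (RingHom.ker r) + Nat.card Rˣ = Nat.card R := by
    rw [Nat.card_congr (Submonoid.unitsTypeEquivIsUnitSubmonoid.toEquiv.trans
      (Equiv.subtypeEquivRight hunit)), ← Nat.card_sum]
    exact Nat.card_congr (Equiv.sumCompl _)
  have hker : Nat.card (RingHom.ker r) * Nat.card F = Nat.card R := by
    have := (r.toAddMonoidHom.ker).card_mul_index
    rwa [AddSubgroup.index_ker, AddMonoidHom.range_eq_top.mpr hr, AddSubgroup.card_top] at this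
  have hu : Nat.card Rˣ = Nat.card (RingHom.ker r) * (Nat.card F - 1) := by
    rw [Nat.mul_sub, mul_one]; omega
  rw [← hker, hu]; ring

theorem Subring.index_units_eq_index_of_finite {A F : Type*} [CommRing A] [Finite A] [Field F]
    (r : A →+* F) [IsLocalHom r] (B : Subring A) (hB : Function.Surjective (r.comp B.subtype)) :
    B.toSubmonoid.units.index = B.toAddSubgroup.index := by
  have := B.isLocalHom_subtype_of_finite
  have hr : Function.Surjective r := Function.Surjective.of_comp (g := B.subtype) hB
  have : Finite F := Finite.of_surjective r hr
  have hA := Nat.card_units_mul_card_eq_of_isLocalHom r hr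
  have hB := Nat.card_units_mul_card_eq_of_isLocalHom (r.comp B.subtype) hB
  have hmul : B.toSubmonoid.units.index * Nat.card Bˣ = Nat.card Aˣ := by
    rw [← B.toSubmonoid.units.index_mul_card,
      Nat.card_congr B.toSubmonoid.unitsEquivUnitsType.toEquiv]
    rfl
  have hadd : Nat.card B * B.toAddSubgroup.index = Nat.card A := B.toAddSubgroup.card_mul_index
  have hpos : 0 < Nat.card Bˣ * Nat.card F := Nat.mul_pos Nat.card_pos Nat.card_pos
  refine Nat.eq_of_mul_eq_mul_right hpos ?_
  calc B.toSubmonoid.units.index * (Nat.card Bˣ * Nat.card F)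
      = Nat.card Aˣ * Nat.card F := by rw [← hmul, mul_assoc]
    _ = B.toAddSubgroup.index * (Nat.card B * (Nat.card F - 1)) := by rw [hA, ← hadd]; ring
    _ = B.toAddSubgroup.index * (Nat.card Bˣ * Nat.card F) := by rw [hB]

section QuotientTransfer

variable {R S : Type*} [CommRing R] [CommRing S] (f : R →+* S) {O : Subring R}

theorem Subring.apply_mem_map_iff_of_ker_le (hker : (RingHom.ker f : Set R) ⊆ O) {x : R} :
    f x ∈ O.map f ↔ x ∈ O := by
  refine ⟨fun ⟨y, hy, hyx⟩ => ?_, fun hx => ⟨x, hx, rfl⟩⟩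
  have hxy : x - y ∈ O := hker (by rw [SetLike.mem_coe, RingHom.mem_ker, map_sub, hyx, sub_self])
  simpa using O.add_mem hxy hy

theorem Subring.index_map_eq_of_ker_le (hf : Function.Surjective f)
    (hker : (RingHom.ker f : Set R) ⊆ O) :
    (O.map f).toAddSubgroup.index = O.toAddSubgroup.index := by
  have hO : O.toAddSubgroup = (O.map f).toAddSubgroup.comap f.toAddMonoidHom := by
    ext x
    exact (Subring.apply_mem_map_iff_of_ker_le f hker).symm
  rw [hO, AddSubgroup.index_comap_of_surjective _ hf]

theorem Subring.index_units_map_eq_of_ker_le [IsLocalHom f] (hf : Function.Surjective f)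
    (hker : (RingHom.ker f : Set R) ⊆ O) :
    (O.map f).toSubmonoid.units.index = O.toSubmonoid.units.index := by
  have hO : O.toSubmonoid.units = (O.map f).toSubmonoid.units.comap (Units.map (f : R →* S)) := by
    ext u
    simp only [Subgroup.mem_comap, Submonoid.mem_units_iff, Units.coe_map, MonoidHom.coe_coe,
      Subring.mem_toSubmonoid, Units.coe_map_inv, Subring.apply_mem_map_iff_of_ker_le f hker]
  rw [hO]
  exact (Subgroup.index_comap_of_surjective _
    (IsLocalRing.surjective_units_map_of_local_ringHom f hf ‹_›)).symm

end QuotientTransfer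

theorem Subring.index_units_eq_index_of_finite_quotient {V : Type*} [CommRing V] [IsLocalRing V]
    (O : Subring V) (hres : Function.Surjective fun o : O => residue V o)
    (I : Ideal V) [Finite (V ⧸ I)] (hIm : I ≤ maximalIdeal V) (hIO : (I : Set V) ⊆ O) :
    O.toSubmonoid.units.index = O.toAddSubgroup.index := by
  have : Nontrivial (V ⧸ I) :=
    Ideal.Quotient.nontrivial_iff.mpr (ne_top_of_le_ne_top (maximalIdeal.isMaximal V).ne_top hIm)
  have : IsLocalHom (Ideal.Quotient.mk I) := .of_surjective _ Ideal.Quotient.mk_surjective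
  have : IsLocalRing (V ⧸ I) := .of_surjective' _ Ideal.Quotient.mk_surjective
  let r : V ⧸ I →+* ResidueField V := Ideal.Quotient.factor hIm
  have : IsLocalHom r := .of_surjective _ (Ideal.Quotient.factor_surjective hIm)
  have hker : (RingHom.ker (Ideal.Quotient.mk I) : Set V) ⊆ O := by rwa [Ideal.mk_ker]
  rw [← O.index_units_map_eq_of_ker_le _ Ideal.Quotient.mk_surjective hker,
    ← O.index_map_eq_of_ker_le _ Ideal.Quotient.mk_surjective hker]
  refine (O.map _).index_units_eq_index_of_finite r fun y => ?_
  obtain ⟨o, ho⟩ := hres y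
  exact ⟨⟨_, o, o.2, rfl⟩, ho⟩

theorem IsDiscreteValuationRing.exists_finite_quotient_le_span {V : Type*} [CommRing V]
    [IsDomain V] [IsDiscreteValuationRing V] [Finite (ResidueField V)] {b : V} (hb : b ≠ 0) :
    ∃ I : Ideal V, Finite (V ⧸ I) ∧ I ≤ IsLocalRing.maximalIdeal V ∧ I ≤ Ideal.span {b} := by
  obtain ⟨n, hn⟩ := exists_maximalIdeal_pow_eq_of_principal V
    (IsPrincipalIdealRing.principal _) (Ideal.span {b}) (by simpa using hb)
  have : Finite (V ⧸ IsLocalRing.maximalIdeal V) := inferInstanceAs (Finite (ResidueField V))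
  -- `m^(n+1)` rather than `m^n = bV`, so that it lies in `m` even when `b` is a unit.
  exact ⟨IsLocalRing.maximalIdeal V ^ (n + 1),
    Ideal.finite_quotient_pow (IsNoetherian.noetherian _) _, Ideal.pow_le_self n.succ_ne_zero,
    hn ▸ Ideal.pow_le_pow_right n.le_succ⟩

theorem universal_zeta_stmt_6_general
    (Fq V K : Type*) [Field Fq] [Fintype Fq] [CommRing V] [IsDomain V]
    [IsDiscreteValuationRing V] [Algebra Fq V]
    [Field K] [Algebra V K] [IsFractionRing V K]
    -- `V` has residue field `F_q`:
    (hres : Function.Bijective ((IsLocalRing.residue V).comp (algebraMap Fq V)))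
    -- `O` is a local `F_q`-subalgebra of `V`:
    (O : Subalgebra Fq V)
    -- whose fraction field equals `K`:
    (hfrac : ∀ x : K, ∃ a b : O, b ≠ 0 ∧ algebraMap V K (b : V) * x = algebraMap V K (a : V))
    -- and such that `δ = dim_{F_q} (V/O)` is finite:
    [FiniteDimensional Fq (V ⧸ Subalgebra.toSubmodule O)]
    -- `H` is the image of `O^×` in `V^×`:
    (H : Subgroup Vˣ)
    (hH : ∀ u : Vˣ, u ∈ H ↔ ((u : V) ∈ O ∧ ((u⁻¹ : Vˣ) : V) ∈ O)) :
    H.index ≠ 0 ∧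
      H.index = Fintype.card Fq ^ Module.finrank Fq (V ⧸ Subalgebra.toSubmodule O) := by
  obtain ⟨b, -, hb0, hbO⟩ := O.exists_ne_zero_forall_mul_mem fun x => by
    obtain ⟨a, b, hb0, hab⟩ := hfrac (algebraMap V K x)
    have hbx : (b : V) * x = a := IsFractionRing.injective V K (by rw [map_mul, hab])
    exact ⟨b, b.2, by exact_mod_cast hb0, hbx ▸ a.2⟩
  have : Finite (ResidueField V) := Finite.of_surjective _ hres.2
  obtain ⟨I, _, hIm, hIb⟩ := IsDiscreteValuationRing.exists_finite_quotient_le_span hb0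
  have hIO : (I : Set V) ⊆ O.toSubring := fun x hx => by
    obtain ⟨y, rfl⟩ := Ideal.mem_span_singleton'.mp (hIb hx)
    rw [mul_comm]
    exact hbO y
  have hOres : Function.Surjective fun o : O.toSubring => residue V o := fun y => by
    obtain ⟨c, rfl⟩ := hres.2 y
    exact ⟨⟨_, O.algebraMap_mem c⟩, rfl⟩
  have hindex : H.index = Fintype.card Fq ^ Module.finrank Fq (V ⧸ Subalgebra.toSubmodule O) := by
    rw [show H = O.toSubmonoid.units from Subgroup.ext hH,
      O.toSubring.index_units_eq_index_of_finite_quotient hOres I hIm hIO,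
      ← Nat.card_eq_fintype_card, ← Module.natCard_eq_pow_finrank]
    rfl
  exact ⟨hindex ▸ pow_ne_zero _ Fintype.card_ne_zero, hindex⟩

/-- Let `F_q` be a finite field, `V` a complete discrete valuation ring
containing `F_q` with fraction field `K`, normalized valuation `v`, and residue field
`F_q`, and let `O ⊆ V` be a local `F_q`-subalgebra with fraction field `K`, maximal ideal
`m_O = m_V ∩ O`, and `δ = dim_{F_q} (V/O)` finite.  Then `O^×` has finite index in `V^×`
and `[V^× : O^×] = q^δ`. -/
theorem universal_zeta_stmt_6
    (Fq V K : Type*) [Field Fq] [Fintype Fq] [CommRing V] [IsDomain V]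
    [IsDiscreteValuationRing V] [Algebra Fq V]
    -- `V` is complete:
    [IsAdicComplete (IsLocalRing.maximalIdeal V) V]
    [Field K] [Algebra V K] [IsFractionRing V K]
    -- `v` is the normalized valuation of `V` on `K^×`:
    (v : K → ℤ)
    (hv_mul : ∀ x y : K, x ≠ 0 → y ≠ 0 → v (x * y) = v x + v y)
    (hv_add : ∀ x y : K, x ≠ 0 → y ≠ 0 → x + y ≠ 0 → min (v x) (v y) ≤ v (x + y))
    (hv_surj : ∀ m : ℤ, ∃ x : K, x ≠ 0 ∧ v x = m)
    (hv_ring : ∀ x : K, x ≠ 0 → (0 ≤ v x ↔ ∃ z : V, algebraMap V K z = x))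
    -- `V` has residue field `F_q`:
    (hres : Function.Bijective ((IsLocalRing.residue V).comp (algebraMap Fq V)))
    -- `O` is a local `F_q`-subalgebra of `V`:
    (O : Subalgebra Fq V) [IsLocalRing O]
    -- whose fraction field equals `K`:
    (hfrac : ∀ x : K, ∃ a b : O, b ≠ 0 ∧ algebraMap V K (b : V) * x = algebraMap V K (a : V))
    -- whose maximal ideal is `m_V ∩ O`:
    (hmax : ∀ z : O, z ∈ IsLocalRing.maximalIdeal O ↔ (z : V) ∈ IsLocalRing.maximalIdeal V)
    -- and such that `δ = dim_{F_q} (V/O)` is finite: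
    [FiniteDimensional Fq (V ⧸ Subalgebra.toSubmodule O)]
    -- `H` is the image of `O^×` in `V^×`:
    (H : Subgroup Vˣ)
    (hH : ∀ u : Vˣ, u ∈ H ↔ ((u : V) ∈ O ∧ ((u⁻¹ : Vˣ) : V) ∈ O)) :
    H.index ≠ 0 ∧
      H.index = Fintype.card Fq ^ Module.finrank Fq (V ⧸ Subalgebra.toSubmodule O) :=
  universal_zeta_stmt_6_general Fq V K hres O hfrac H hH
end
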